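/- The six qubit states |0⟩, |1⟩, |±⟩ = (|0⟩±|1⟩)/√2, |±̃⟩ = (|0⟩±i|1⟩)/√2 with uniform probability 1/6 form a 3-copy CSS: (1/6) Σ_α (|α⟩⟨α|)^{⊗3} = P_+^3 / 4, where P_+^3 is the projector onto Sym^3(ℂ^2) (dimension 4). -/

import Mathlib

open scoped BigOperators

/-- `M`-fold tensor power `|φ⟩^{⊗M}` of a vector `φ ∈ ℂ^d`, as a vector on the
computational product basis `Fin M → Fin d`. -/
noncomputable def vecPow {d : ℕ} (M : ℕ) (φ : Fin d → ℂ) : (Fin M → Fin d) → ℂ :=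
  fun f => ∏ i, φ (f i)

/-- Rank-one operator `|v⟩⟨v|`. -/
noncomputable def projOp {n : Type*} [Fintype n] (v : n → ℂ) : Matrix n n ℂ :=
  Matrix.of fun i j => v i * star (v j)

/-- The orthogonal projector `P_+^M` onto the symmetric subspace of `(ℂ^d)^{⊗M}`. -/
noncomputable def symProj (d M : ℕ) : Matrix (Fin M → Fin d) (Fin M → Fin d) ℂ :=
  Matrix.of fun f g =>
    (∑ σ : Equiv.Perm (Fin M), if f = g ∘ σ then (1 : ℂ) else 0) / (Nat.factorial M : ℂ)

/-- `d_M^+ = C(M+d-1, M)`, the dimension of the symmetric subspace. -/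
def dPlus (d M : ℕ) : ℕ := (M + d - 1).choose M

/-- The six single-qubit Pauli eigenstates
`|0⟩, |1⟩, |±⟩ = (|0⟩±|1⟩)/√2, |±̃⟩ = (|0⟩±i|1⟩)/√2`. -/
noncomputable def sixStates : Fin 6 → Fin 2 → ℂ :=
  ![![1, 0],
    ![0, 1],
    ![(((Real.sqrt 2)⁻¹ : ℝ) : ℂ), (((Real.sqrt 2)⁻¹ : ℝ) : ℂ)],
    ![(((Real.sqrt 2)⁻¹ : ℝ) : ℂ), -(((Real.sqrt 2)⁻¹ : ℝ) : ℂ)],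
    ![(((Real.sqrt 2)⁻¹ : ℝ) : ℂ), Complex.I * (((Real.sqrt 2)⁻¹ : ℝ) : ℂ)],
    ![(((Real.sqrt 2)⁻¹ : ℝ) : ℂ), -(Complex.I * (((Real.sqrt 2)⁻¹ : ℝ) : ℂ))]]

/-!
Every entry of either side, between computational basis vectors `f` and `g`, depends only on
their Hamming weights `k` and `l`. Counting the permutations that carry `g` to `f` with the
orbit–stabiliser theorem, `P_+^3` has entry `1 / C(3, k)` if `k = l` and `0` otherwise. The
entry of `(|φ⟩⟨φ|)^{⊗3}` is `φ₀^{3-k} φ₁^k conj (φ₀^{3-l} φ₁^l)`. The poles `|0⟩, |1⟩` contribute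
only to `k = l ∈ {0, 3}`, while the four equator states `(|0⟩ + ω|1⟩)/√2`, `ω⁴ = 1`, contribute
`(1/8) ∑_ω ω^k conj ω^l = [k = l] / 2` by orthogonality of the characters of `ℤ/4`.
-/

open Finset
open scoped Nat

section PermCount

variable {α ι : Type*} [Fintype α] [DecidableEq ι]

theorem card_fiber_comp_perm (g : α → ι) (σ : Equiv.Perm α) (j : ι) :
    #{a | g (σ a) = j} = #{a | g a = j} := by
  rw [← Fintype.card_subtype, ← Fintype.card_subtype]
  exact Fintype.card_congr (σ.subtypeEquiv fun _ => Iff.rfl)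

theorem exists_perm_comp_eq_of_card_fiber_eq {f g : α → ι}
    (h : ∀ j, #{a | f a = j} = #{a | g a = j}) : ∃ σ : Equiv.Perm α, f = g ∘ σ := by
  have e : ∀ j, {a // f a = j} ≃ {a // g a = j} := fun j =>
    Fintype.equivOfCardEq (by rw [Fintype.card_subtype, Fintype.card_subtype, h j])
  exact ⟨Equiv.ofFiberEquiv e, funext fun a => (Equiv.ofFiberEquiv_map e a).symm⟩

theorem card_perm_comp_eq [DecidableEq α] [Fintype ι] (f g : α → ι) :
    #{σ : Equiv.Perm α | f = g ∘ σ} =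
      if ∀ j, #{a | f a = j} = #{a | g a = j} then ∏ j, (#{a | g a = j})! else 0 := by
  split_ifs with h
  · obtain ⟨σ₀, rfl⟩ := exists_perm_comp_eq_of_card_fiber_eq h
    have e : {σ : Equiv.Perm α // g ∘ σ₀ = g ∘ σ} ≃ {τ : Equiv.Perm α // g ∘ τ = g} :=
      (Equiv.mulRight σ₀⁻¹).subtypeEquiv fun σ => by
        rw [Equiv.coe_mulRight, Equiv.Perm.coe_mul, Equiv.Perm.inv_def, ← Function.comp_assoc,
          Equiv.comp_symm_eq, eq_comm]
    rw [← Fintype.card_subtype, Fintype.card_congr e, DomMulAct.stabilizer_card]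
    simp only [Fintype.card_subtype]
  · refine card_eq_zero.2 (filter_eq_empty_iff.2 ?_)
    rintro σ - rfl
    exact h fun j => card_fiber_comp_perm g σ j

end PermCount

theorem vecPow_eq_prod_pow_card_fiber {d M : ℕ} (v : Fin d → ℂ) (f : Fin M → Fin d) :
    vecPow M v f = ∏ j, v j ^ #{i | f i = j} := by
  simp only [vecPow, ← Finset.prod_fiberwise' univ f v, prod_const]

theorem symProj_apply {d M : ℕ} (f g : Fin M → Fin d) :
    symProj d M f g = (#{σ : Equiv.Perm (Fin M) | f = g ∘ σ} : ℂ) / (M ! : ℂ) := by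
  simp [symProj]

section Qubit

variable {M : ℕ}

theorem hammingNorm_le_of_fin {β : Type*} [Zero β] [DecidableEq β] (x : Fin M → β) :
    hammingNorm x ≤ M :=
  hammingNorm_le_card_fintype.trans_eq (Fintype.card_fin M)

theorem card_fiber_qubit (f : Fin M → Fin 2) :
    #{i | f i = 0} = M - hammingNorm f ∧ #{i | f i = 1} = hammingNorm f := by
  have hsplit := card_filter_add_card_filter_not (s := univ) (fun i => f i = 0)
  have hone : ∀ i, f i = 1 ↔ f i ≠ 0 := fun i => by omega
  simp only [card_univ, Fintype.card_fin] at hsplit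
  simp only [hone]
  exact ⟨by simp only [hammingNorm, ne_eq]; omega, rfl⟩

theorem vecPow_qubit (v : Fin 2 → ℂ) (f : Fin M → Fin 2) :
    vecPow M v f = v 0 ^ (M - hammingNorm f) * v 1 ^ hammingNorm f := by
  rw [vecPow_eq_prod_pow_card_fiber, Fin.prod_univ_two, (card_fiber_qubit f).1,
    (card_fiber_qubit f).2]

theorem symProj_qubit (f g : Fin M → Fin 2) :
    symProj 2 M f g =
      if hammingNorm f = hammingNorm g then (M.choose (hammingNorm f) : ℂ)⁻¹ else 0 := by
  have hf := card_fiber_qubit f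
  have hg := card_fiber_qubit g
  rw [symProj_apply, card_perm_comp_eq]
  simp only [Fin.forall_fin_two, Fin.prod_univ_two, hf.1, hf.2, hg.1, hg.2]
  by_cases h : hammingNorm f = hammingNorm g
  · rw [if_pos ⟨by rw [h], h⟩, if_pos h, h,
      ← Nat.choose_mul_factorial_mul_factorial (hammingNorm_le_of_fin g)]
    have : ((M - hammingNorm g)! : ℂ) ≠ 0 := Nat.cast_ne_zero.2 (Nat.factorial_ne_zero _)
    have : ((hammingNorm g)! : ℂ) ≠ 0 := Nat.cast_ne_zero.2 (Nat.factorial_ne_zero _)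
    push_cast
    field_simp
  · rw [if_neg fun h' => h h'.2, if_neg h, Nat.cast_zero, zero_div]

end Qubit

theorem equator_entry {M k l : ℕ} {v : Fin 2 → ℂ} {s : ℝ} {ω : ℂ} (h0 : v 0 = s)
    (h1 : v 1 = ω * s) (hk : k ≤ M) (hl : l ≤ M) :
    v 0 ^ (M - k) * v 1 ^ k * star (v 0 ^ (M - l) * v 1 ^ l) =
      (s : ℂ) ^ (2 * M) * (ω ^ k * star ω ^ l) := by
  simp only [h0, h1, star_mul, star_pow, Complex.star_def, Complex.conj_ofReal]
  calc _ = ((s : ℂ) ^ (M - k) * (s : ℂ) ^ k) * ((s : ℂ) ^ (M - l) * (s : ℂ) ^ l) *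
        (ω ^ k * (starRingEnd ℂ) ω ^ l) := by ring
    _ = _ := by rw [pow_sub_mul_pow _ hk, pow_sub_mul_pow _ hl]; ring

theorem sixStates_moment {k l : ℕ} (hk : k ≤ 3) (hl : l ≤ 3) :
    (6 : ℂ)⁻¹ * ∑ α, sixStates α 0 ^ (3 - k) * sixStates α 1 ^ k *
        star (sixStates α 0 ^ (3 - l) * sixStates α 1 ^ l) =
      (4 : ℂ)⁻¹ * if k = l then (Nat.choose 3 k : ℂ)⁻¹ else 0 := by
  set s : ℝ := (√2)⁻¹
  have hs : (s : ℂ) ^ (2 * 3) = 8⁻¹ := by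
    rw [pow_mul, ← Complex.ofReal_pow, inv_pow, Real.sq_sqrt zero_le_two]
    norm_num
  have equator : ∀ α ω, sixStates α 0 = s → sixStates α 1 = ω * s →
      sixStates α 0 ^ (3 - k) * sixStates α 1 ^ k *
        star (sixStates α 0 ^ (3 - l) * sixStates α 1 ^ l) = 8⁻¹ * (ω ^ k * star ω ^ l) :=
    fun _ _ h0 h1 => by rw [equator_entry h0 h1 hk hl, hs]
  rw [Fin.sum_univ_six, equator 2 1 rfl (one_mul _).symm, equator 3 (-1) rfl (neg_one_mul _).symm,
    equator 4 Complex.I rfl rfl, equator 5 (-Complex.I) rfl (neg_mul _ _).symm]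
  interval_cases k <;> interval_cases l <;> simp [sixStates, Complex.conj_I, pow_succ] <;> ring_nf

/-- The six Pauli eigenstates with uniform probability `1/6` form a
3-copy CSS: `(1/6) Σ_α (|α⟩⟨α|)^{⊗3} = P_+^3 / 4` on `(ℂ²)^{⊗3}`. -/
theorem six_states_three_copy_css :
    (6 : ℂ)⁻¹ • ∑ α : Fin 6, projOp (vecPow 3 (sixStates α))
      = (4 : ℂ)⁻¹ • symProj 2 3 := by
  ext f g
  simp only [Matrix.smul_apply, Matrix.sum_apply, projOp, Matrix.of_apply, vecPow_qubit,
    symProj_qubit, smul_eq_mul]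
  exact sixStates_moment (hammingNorm_le_of_fin f) (hammingNorm_le_of_fin g)
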